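/- arXiv:1801.00518 — 4 statements merged into one kernel-verified Lean document; each statement's English description precedes it below -/
import Mathlib

section
/- There exists an absolute constant C ≥ 1 such that the following holds. Let p ≥ 1, k ∈ {1,…,p}, and let M be a nonzero p×p real matrix that is k-sparse. Let r = ‖M‖_F²/‖M‖₂² be the stable rank of M. Then there exist subsets I, J ⊆ {1,…,p} with |I| ≤ C·k·r and |J| ≤ C·k·r·log(e·r) such that ‖M_{IJ}‖₂ ≥ (1/8)·‖M‖₂, where M_{IJ} denotes the submatrix of M with rows indexed by I and columns indexed by J. -/
open Real

noncomputable section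

/-- Spectral norm (largest singular value) of a real matrix. -/
def specNorm {m n : Type*} [Fintype m] [Fintype n] [DecidableEq n]
    (A : Matrix m n ℝ) : ℝ :=
  ‖LinearMap.toContinuousLinearMap (Matrix.toEuclideanLin A)‖

/-- Frobenius norm of a real matrix. -/
def frobNorm {m n : Type*} [Fintype m] [Fintype n] (A : Matrix m n ℝ) : ℝ :=
  Real.sqrt (∑ i, ∑ j, (A i j) ^ 2)

/-- A matrix is `k`-sparse if every row and column has at most `k` nonzero entries. -/
def IsKSparse {p : ℕ} (k : ℕ) (M : Matrix (Fin p) (Fin p) ℝ) : Prop :=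
  (∀ i, (Finset.univ.filter fun j => M i j ≠ 0).card ≤ k) ∧
  (∀ j, (Finset.univ.filter fun i => M i j ≠ 0).card ≤ k)

end

/-!
Call a row of `M` heavy if its squared Euclidean norm is at least `t = ‖M‖² / (64 k)`, and
likewise for columns. Since `‖M‖_F² = r ‖M‖²`, there are at most `64 k r` heavy rows `I` and
heavy columns `J`. With the coordinate projections `P`, split
`M = P_I M P_J + P_I M P_Jᶜ + P_Iᶜ M`. The last term has light rows and `k`-sparse columns, so
Cauchy–Schwarz on each row gives it norm at most `√(k t) = ‖M‖ / 8`; the middle term is the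
transposed situation. Hence `‖M_IJ‖ ≥ ‖P_I M P_J‖ ≥ 3 ‖M‖ / 4`.
-/

open Finset
open scoped Matrix Matrix.Norms.L2Operator

namespace Matrix

section L2OpNorm

variable {m n : Type*} [Fintype m] [Fintype n] [DecidableEq n]

lemma specNorm_eq_l2_opNorm (A : Matrix m n ℝ) : specNorm A = ‖A‖ := rfl

lemma l2_opNorm_sq_le_of_forall_sum_sq_mulVec_le (A : Matrix m n ℝ) {c : ℝ} (hc : 0 ≤ c)
    (h : ∀ x : n → ℝ, ∑ i, (A *ᵥ x) i ^ 2 ≤ c * ∑ j, x j ^ 2) : ‖A‖ ^ 2 ≤ c := by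
  suffices ‖A‖ ≤ √c from (Real.le_sqrt (norm_nonneg _) hc).mp this
  rw [l2_opNorm_def]
  refine ContinuousLinearMap.opNorm_le_bound _ (Real.sqrt_nonneg c) fun x => ?_
  refine (sq_le_sq₀ (norm_nonneg _) (by positivity)).mp ?_
  rw [mul_pow, Real.sq_sqrt hc, EuclideanSpace.norm_sq_eq, EuclideanSpace.norm_sq_eq]
  simpa using h x

lemma l2_opNorm_sq_le_sum_sq (A : Matrix m n ℝ) : ‖A‖ ^ 2 ≤ ∑ i, ∑ j, A i j ^ 2 := by
  refine l2_opNorm_sq_le_of_forall_sum_sq_mulVec_le A (by positivity) fun x => ?_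
  rw [sum_mul]
  exact sum_le_sum fun i _ => sum_mul_sq_le_sq_mul_sq _ _ _

lemma l2_opNorm_sq_le_of_sum_sq_row_le_of_card_col_support_le (A : Matrix m n ℝ) {c : ℝ}
    (hc : 0 ≤ c) {k : ℕ} (hrow : ∀ i, ∑ j, A i j ^ 2 ≤ c) (hcol : ∀ j, #{i | A i j ≠ 0} ≤ k) :
    ‖A‖ ^ 2 ≤ k * c := by
  classical
  refine l2_opNorm_sq_le_of_forall_sum_sq_mulVec_le A (by positivity) fun x => ?_
  -- `x` restricted to the support of row `i`; each `x j` survives in at most `k` rows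
  set y : m → n → ℝ := fun i j => if A i j ≠ 0 then x j else 0
  have hrow_le (i : m) : (A *ᵥ x) i ^ 2 ≤ c * ∑ j, y i j ^ 2 := by
    have hy : (A *ᵥ x) i = ∑ j, A i j * y i j := by
      simp only [mulVec, dotProduct, y]
      exact sum_congr rfl fun j _ => by by_cases h : A i j = 0 <;> simp [h]
    rw [hy]
    exact (sum_mul_sq_le_sq_mul_sq _ _ _).trans
      (mul_le_mul_of_nonneg_right (hrow i) (by positivity))
  have hcol_le (j : n) : ∑ i, y i j ^ 2 ≤ k * x j ^ 2 := by
    calc ∑ i, y i j ^ 2 = #{i | A i j ≠ 0} * x j ^ 2 := by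
          simp [y, ite_pow, sum_ite, sum_const]
      _ ≤ k * x j ^ 2 := by gcongr; exact hcol j
  calc ∑ i, (A *ᵥ x) i ^ 2 ≤ ∑ i, c * ∑ j, y i j ^ 2 := sum_le_sum fun i _ => hrow_le i
    _ = c * ∑ j, ∑ i, y i j ^ 2 := by rw [← mul_sum, sum_comm]
    _ ≤ c * ∑ j, k * x j ^ 2 := by gcongr with j; exact hcol_le j
    _ = k * c * ∑ j, x j ^ 2 := by rw [← mul_sum]; ring

end L2OpNorm

section CoordProj

variable {m n : Type*} [DecidableEq m]

def coordProj (I : Finset m) : Matrix m m ℝ := diagonal fun i => if i ∈ I then 1 else 0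

def coordIncl (I : Finset m) : Matrix m I ℝ := (1 : Matrix m m ℝ).submatrix id (↑)

lemma transpose_coordProj (I : Finset m) : (coordProj I)ᵀ = coordProj I := diagonal_transpose _

lemma coordIncl_mul_transpose (I : Finset m) : coordIncl I * (coordIncl I)ᵀ = coordProj I := by
  ext i i'
  simp only [coordProj, coordIncl, mul_apply, submatrix_apply, transpose_apply, one_apply,
    diagonal_apply, id]
  rw [sum_coe_sort I fun a => (if i = a then (1 : ℝ) else 0) * if i' = a then 1 else 0]
  by_cases h : i = i' <;> simp [h]

variable [Fintype m]

lemma coordProj_univ : coordProj (univ : Finset m) = 1 := by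
  simp [coordProj]

lemma coordProj_add_coordProj_compl (I : Finset m) : coordProj I + coordProj Iᶜ = 1 := by
  ext i j
  by_cases h : i ∈ I <;> simp [coordProj, diagonal_apply, one_apply, h]

lemma transpose_coordIncl_mul (I : Finset m) (A : Matrix m n ℝ) :
    (coordIncl I)ᵀ * A = A.submatrix (↑) id := by
  rw [coordIncl, transpose_submatrix, transpose_one]
  exact one_submatrix_mul _ (Equiv.refl m) A

lemma mul_coordIncl (I : Finset m) (A : Matrix n m ℝ) : A * coordIncl I = A.submatrix id (↑) :=
  mul_submatrix_one (Equiv.refl m) _ A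

lemma l2_opNorm_coordIncl_le (I : Finset m) : ‖coordIncl I‖ ≤ 1 := by
  have h : ‖coordIncl I‖ * ‖coordIncl I‖ ≤ 1 := by
    rw [← l2_opNorm_conjTranspose_mul_self, conjTranspose_eq_transpose_of_trivial,
      transpose_coordIncl_mul, coordIncl, submatrix_submatrix, Function.id_comp,
      Function.comp_id, submatrix_one _ Subtype.val_injective, ← diagonal_one,
      l2_opNorm_diagonal]
    exact pi_norm_le_iff_of_nonneg zero_le_one |>.mpr fun _ => by simp
  nlinarith [norm_nonneg (coordIncl I)]

variable [Fintype n] [DecidableEq n]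

lemma coordProj_mul_mul_coordProj_apply (I : Finset m) (J : Finset n) (A : Matrix m n ℝ)
    (i : m) (j : n) :
    (coordProj I * A * coordProj J) i j = if i ∈ I ∧ j ∈ J then A i j else 0 := by
  by_cases hi : i ∈ I <;> by_cases hj : j ∈ J <;> simp [coordProj, hi, hj]

lemma l2_opNorm_coordProj_mul_mul_coordProj_le (A : Matrix m n ℝ) (I : Finset m)
    (J : Finset n) :
    ‖coordProj I * A * coordProj J‖ ≤ ‖A.submatrix ((↑) : I → m) ((↑) : J → n)‖ := by
  have hsub : (coordIncl I)ᵀ * A * coordIncl J = A.submatrix (↑) (↑) := by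
    rw [transpose_coordIncl_mul, mul_coordIncl, submatrix_submatrix]
    rfl
  have hfactor : coordProj I * A * coordProj J =
      coordIncl I * A.submatrix ((↑) : I → m) ((↑) : J → n) * (coordIncl J)ᵀ := by
    rw [← coordIncl_mul_transpose, ← coordIncl_mul_transpose, ← hsub]
    simp only [Matrix.mul_assoc]
  have hJ : ‖(coordIncl J)ᵀ‖ ≤ 1 := by
    rw [← conjTranspose_eq_transpose_of_trivial, l2_opNorm_conjTranspose]
    exact l2_opNorm_coordIncl_le J
  rw [hfactor]
  calc _ ≤ ‖coordIncl I‖ * ‖A.submatrix ((↑) : I → m) ((↑) : J → n)‖ * ‖(coordIncl J)ᵀ‖ :=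
        (l2_opNorm_mul _ _).trans (by gcongr; exact l2_opNorm_mul _ _)
    _ ≤ 1 * ‖A.submatrix ((↑) : I → m) ((↑) : J → n)‖ * 1 := by
        gcongr
        exact l2_opNorm_coordIncl_le I
    _ = _ := by ring

end CoordProj

section HeavyRows

variable {m n : Type*} [Fintype m] [Fintype n]

noncomputable def heavyRows (A : Matrix m n ℝ) (t : ℝ) : Finset m := {i | t ≤ ∑ j, A i j ^ 2}

lemma card_heavyRows_le (A : Matrix m n ℝ) {t : ℝ} (ht : 0 < t) :
    (#(heavyRows A t) : ℝ) ≤ (∑ i, ∑ j, A i j ^ 2) / t := by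
  rw [le_div_iff₀ ht, ← nsmul_eq_mul]
  calc #(heavyRows A t) • t ≤ ∑ i ∈ heavyRows A t, ∑ j, A i j ^ 2 :=
        card_nsmul_le_sum _ _ _ fun i hi => (mem_filter.mp hi).2
    _ ≤ ∑ i, ∑ j, A i j ^ 2 :=
        sum_le_sum_of_subset_of_nonneg (subset_univ _) fun _ _ _ => by positivity

variable [DecidableEq m] [DecidableEq n]

lemma l2_opNorm_coordProj_compl_heavyRows_mul_mul_coordProj_le (A : Matrix m n ℝ) {k : ℕ}
    (hcol : ∀ j, #{i | A i j ≠ 0} ≤ k) {t : ℝ} (ht : 0 ≤ t) (J : Finset n) :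
    ‖coordProj (heavyRows A t)ᶜ * A * coordProj J‖ ≤ √(k * t) := by
  refine (Real.le_sqrt (norm_nonneg _) (by positivity)).mpr <|
    l2_opNorm_sq_le_of_sum_sq_row_le_of_card_col_support_le _ ht (fun i => ?_) (fun j => ?_)
  · simp only [coordProj_mul_mul_coordProj_apply]
    by_cases hi : i ∈ heavyRows A t
    · simp [hi, ht]
    · have hlight : ∑ j, A i j ^ 2 < t := by simpa [heavyRows] using hi
      refine le_trans (sum_le_sum fun j _ => ?_) hlight.le
      split_ifs <;> simp [sq_nonneg]
  · refine (card_le_card fun i => ?_).trans (hcol j)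
    simp only [mem_filter, mem_univ, true_and, coordProj_mul_mul_coordProj_apply]
    split_ifs <;> simp

lemma l2_opNorm_le_submatrix_heavyRows_add (A : Matrix m n ℝ) {k : ℕ}
    (hrow : ∀ i, #{j | A i j ≠ 0} ≤ k) (hcol : ∀ j, #{i | A i j ≠ 0} ≤ k) {t : ℝ} (ht : 0 ≤ t) :
    ‖A‖ ≤ ‖A.submatrix ((↑) : heavyRows A t → m) ((↑) : heavyRows Aᵀ t → n)‖
      + 2 * √(k * t) := by
  set I := heavyRows A t
  set J := heavyRows Aᵀ t
  have hsplit : A = coordProj I * A * coordProj J + coordProj I * A * coordProj Jᶜ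
      + coordProj Iᶜ * A * coordProj (univ : Finset n) := by
    rw [coordProj_univ, Matrix.mul_one, ← Matrix.mul_add, coordProj_add_coordProj_compl,
      Matrix.mul_one, ← Matrix.add_mul, coordProj_add_coordProj_compl, Matrix.one_mul]
  have hlightCols : ‖coordProj I * A * coordProj Jᶜ‖ ≤ √(k * t) := by
    rw [← l2_opNorm_conjTranspose, conjTranspose_eq_transpose_of_trivial, transpose_mul,
      transpose_mul, transpose_coordProj, transpose_coordProj, ← Matrix.mul_assoc]
    exact l2_opNorm_coordProj_compl_heavyRows_mul_mul_coordProj_le Aᵀ hrow ht I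
  have hlightRows :=
    l2_opNorm_coordProj_compl_heavyRows_mul_mul_coordProj_le A hcol ht (univ : Finset n)
  have htri : ‖A‖ ≤ ‖coordProj I * A * coordProj J‖ + ‖coordProj I * A * coordProj Jᶜ‖
      + ‖coordProj Iᶜ * A * coordProj (univ : Finset n)‖ := by
    conv_lhs => rw [hsplit]
    exact norm_add₃_le
  linarith [l2_opNorm_coordProj_mul_mul_coordProj_le A I J]

end HeavyRows

end Matrix

/-- a `k`-sparse matrix of stable rank `r` has an
`O(kr) × O(kr log(er))` submatrix carrying a constant fraction of its spectral norm. -/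
theorem sparse_matrix_has_large_small_submatrix :
    ∃ C : ℝ, 1 ≤ C ∧
      ∀ (p k : ℕ), 1 ≤ p → 1 ≤ k → k ≤ p →
        ∀ M : Matrix (Fin p) (Fin p) ℝ, M ≠ 0 → IsKSparse k M →
          ∀ r : ℝ, r = frobNorm M ^ 2 / specNorm M ^ 2 →
            ∃ I J : Finset (Fin p),
              (I.card : ℝ) ≤ C * k * r ∧
              (J.card : ℝ) ≤ C * k * r * Real.log (Real.exp 1 * r) ∧
              (1 / 8) * specNorm M ≤
                specNorm (M.submatrix (fun i : ↥I => (i : Fin p)) (fun j : ↥J => (j : Fin p))) := by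
  refine ⟨64, by norm_num, fun p k _ hk _ M hM hsparse r hr => ?_⟩
  have hσ : 0 < ‖M‖ := norm_pos_iff.mpr hM
  have hk : (0 : ℝ) < k := by exact_mod_cast hk
  set t := ‖M‖ ^ 2 / (64 * k) with ht_def
  have ht : 0 < t := by positivity
  have hfrob : ∑ i, ∑ j, M i j ^ 2 = r * ‖M‖ ^ 2 := by
    rw [hr, frobNorm, Real.sq_sqrt (by positivity), Matrix.specNorm_eq_l2_opNorm]
    field_simp
  have hr1 : 1 ≤ r := le_of_mul_le_mul_right
    (by rw [one_mul, ← hfrob]; exact M.l2_opNorm_sq_le_sum_sq) (by positivity : 0 < ‖M‖ ^ 2)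
  have hcard (A : Matrix (Fin p) (Fin p) ℝ) (hA : ∑ i, ∑ j, A i j ^ 2 = r * ‖M‖ ^ 2) :
      (#(A.heavyRows t) : ℝ) ≤ 64 * k * r :=
    (A.card_heavyRows_le ht).trans_eq (by rw [hA, ht_def]; field_simp)
  have hlog : 1 ≤ Real.log (Real.exp 1 * r) := by
    rw [Real.log_mul (Real.exp_ne_zero 1) (by positivity), Real.log_exp]
    linarith [Real.log_nonneg hr1]
  have hkt : √(k * t) = ‖M‖ / 8 := by
    rw [show k * t = (‖M‖ / 8) ^ 2 by rw [ht_def]; field_simp; ring, Real.sqrt_sq (by positivity)]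
  refine ⟨M.heavyRows t, Mᵀ.heavyRows t, hcard M hfrob,
    (hcard Mᵀ (by rw [← hfrob, sum_comm]; rfl)).trans
      (le_mul_of_one_le_right (by positivity) hlog), ?_⟩
  have hnorm := M.l2_opNorm_le_submatrix_heavyRows_add hsparse.1 hsparse.2 ht.le
  rw [Matrix.specNorm_eq_l2_opNorm, Matrix.specNorm_eq_l2_opNorm]
  linarith
end

section
/- Let p ≥ 1, 1 ≤ k ≤ p, ε ∈ (0,1), and set τ = √(2·log(4p²/ε)). Observe X = M + Z where Z has i.i.d. N(0,1) entries. Let X^th be the entrywise thresholded matrix with entries X^th_{ij} = X_{ij}·1{|X_{ij}| ≥ τ}, and define the test ψ(X) = 1{‖X^th‖₂ ≥ 2kτ}. If λ ≥ 4kτ = 4k·√(2·log(4p²/ε)), then P₀(ψ=1) + sup_{M ∈ Θ(p,k,λ)} P_M(ψ=0) ≤ ε. -/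
open MeasureTheory ProbabilityTheory Real Filter
open scoped ENNReal NNReal

noncomputable section

/-- Law of a `p × p` matrix with i.i.d. standard Gaussian entries. -/
def stdGaussMatrix (p : ℕ) : Measure (Fin p → Fin p → ℝ) :=
  Measure.pi fun _ => Measure.pi fun _ => gaussianReal 0 1

/-- Law of the observation `X = M + Z` with `Z` an i.i.d. standard Gaussian matrix. -/
def PM {p : ℕ} (M : Matrix (Fin p) (Fin p) ℝ) : Measure (Fin p → Fin p → ℝ) :=
  (stdGaussMatrix p).map (fun z => fun i j => M i j + z i j)

/-- The alternative hypothesis `Θ(p,k,λ)`: `k`-sparse matrices of spectral norm at least `λ`. -/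
def ThetaSet (p k : ℕ) (lam : ℝ) : Set (Matrix (Fin p) (Fin p) ℝ) :=
  {M | IsKSparse k M ∧ lam ≤ specNorm M}

/-- Entrywise hard thresholding of a matrix at level `τ`. -/
def hardThreshold {p : ℕ} (τ : ℝ) (x : Fin p → Fin p → ℝ) : Matrix (Fin p) (Fin p) ℝ :=
  Matrix.of fun i j => if τ ≤ |x i j| then x i j else 0

end

/-!
Let `G` be the event that every noise entry satisfies `|Z i j| < τ`. A union bound over the
`p²` entries and the Gaussian Chernoff bound `P(|Z i j| ≥ τ) ≤ 2 exp (-τ²/2)` give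
`P(Gᶜ) ≤ ε/2` for the chosen `τ`. On `G` the test never errs: under the null every entry of
`X = Z` is killed by the threshold, and under `M ∈ Θ(p,k,λ)` the difference `M - Xᵗʰ` is
supported on the support of `M`, hence `k`-sparse, with entries at most `2τ`; by the Schur test
its spectral norm is at most `2kτ`, so `‖Xᵗʰ‖₂ ≥ λ - 2kτ ≥ 2kτ`.
-/

open Finset
open scoped Matrix.Norms.L2Operator

lemma specNorm_eq_l2_opNorm {m n : Type*} [Fintype m] [Fintype n] [DecidableEq n]
    (A : Matrix m n ℝ) : specNorm A = ‖A‖ := rfl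

lemma sq_sum_mul_le_sum_abs_mul_sum_abs_mul_sq {n : Type*} [Fintype n] (a u : n → ℝ) :
    (∑ j, a j * u j) ^ 2 ≤ (∑ j, |a j|) * ∑ j, |a j| * u j ^ 2 := by
  calc (∑ j, a j * u j) ^ 2 ≤ (∑ j, |a j| * |u j|) ^ 2 := by
        rw [← sq_abs]
        gcongr
        simpa only [abs_mul] using abs_sum_le_sum_abs (fun j => a j * u j) univ
    _ ≤ (∑ j, |a j|) * ∑ j, |a j| * u j ^ 2 :=
        sum_sq_le_sum_mul_sum_of_sq_le_mul _ (fun j _ => abs_nonneg _)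
          (fun j _ => by positivity) (fun j _ => by rw [mul_pow, sq_abs (u j), sq, mul_assoc])

/-- Schur test. -/
theorem Matrix.l2_opNorm_le_sqrt_mul_of_sum_abs_le {m n : Type*} [Fintype m] [Fintype n]
    [DecidableEq n] (A : Matrix m n ℝ) {r c : ℝ} (hr : 0 ≤ r) (hc : 0 ≤ c)
    (hrow : ∀ i, ∑ j, |A i j| ≤ r) (hcol : ∀ j, ∑ i, |A i j| ≤ c) : ‖A‖ ≤ √(r * c) := by
  rw [Matrix.l2_opNorm_def]
  refine ContinuousLinearMap.opNorm_le_bound _ (Real.sqrt_nonneg _) fun x => ?_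
  rw [← sq_le_sq₀ (norm_nonneg _) (by positivity), mul_pow, Real.sq_sqrt (mul_nonneg hr hc),
    EuclideanSpace.real_norm_sq_eq, EuclideanSpace.real_norm_sq_eq]
  calc ∑ i, (A.mulVec x.ofLp) i ^ 2
      ≤ ∑ i, (∑ j, |A i j|) * ∑ j, |A i j| * x j ^ 2 :=
        sum_le_sum fun i _ => sq_sum_mul_le_sum_abs_mul_sum_abs_mul_sq _ _
    _ ≤ ∑ i, r * ∑ j, |A i j| * x j ^ 2 := by gcongr with i; exact hrow i
    _ = r * ∑ j, (∑ i, |A i j|) * x j ^ 2 := by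
        rw [← mul_sum, sum_comm]; simp only [sum_mul]
    _ ≤ r * ∑ j, c * x j ^ 2 := by gcongr with j; exact hcol j
    _ = r * c * ∑ j, x j ^ 2 := by rw [← mul_sum, mul_assoc]

lemma sum_abs_le_of_card_support_le {ι : Type*} [Fintype ι] [DecidableEq ι] {f : ι → ℝ}
    {k : ℕ} {a : ℝ} (ha : 0 ≤ a) (hk : #{j | f j ≠ 0} ≤ k) (hf : ∀ j, |f j| ≤ a) :
    ∑ j, |f j| ≤ k * a := by
  calc ∑ j, |f j| = ∑ j with f j ≠ 0, |f j| := by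
        simp only [← abs_ne_zero (a := f _), sum_filter_ne_zero]
    _ ≤ #{j | f j ≠ 0} * a := by
        simpa only [nsmul_eq_mul] using sum_le_card_nsmul _ _ a fun j _ => hf j
    _ ≤ k * a := by gcongr

namespace IsKSparse

variable {p k : ℕ}

lemma mono {A B : Matrix (Fin p) (Fin p) ℝ} (hA : IsKSparse k A)
    (hBA : ∀ i j, B i j ≠ 0 → A i j ≠ 0) : IsKSparse k B :=
  ⟨fun i => (card_le_card (monotone_filter_right _ fun j _ => hBA i j)).trans (hA.1 i),
    fun j => (card_le_card (monotone_filter_right _ fun i _ => hBA i j)).trans (hA.2 j)⟩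

lemma specNorm_le {A : Matrix (Fin p) (Fin p) ℝ} (hA : IsKSparse k A) {a : ℝ} (ha : 0 ≤ a)
    (hAa : ∀ i j, |A i j| ≤ a) : specNorm A ≤ k * a := by
  have hka : 0 ≤ (k : ℝ) * a := by positivity
  calc specNorm A ≤ √((k * a) * (k * a)) :=
        A.l2_opNorm_le_sqrt_mul_of_sum_abs_le hka hka
          (fun i => sum_abs_le_of_card_support_le ha (hA.1 i) (hAa i))
          (fun j => sum_abs_le_of_card_support_le ha (hA.2 j) (hAa · j))
    _ = k * a := Real.sqrt_mul_self hka

end IsKSparse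

section HardThreshold

variable {p : ℕ} {τ : ℝ}

lemma hardThreshold_apply_of_abs_lt {x : Fin p → Fin p → ℝ} {i j : Fin p} (h : |x i j| < τ) :
    hardThreshold τ x i j = 0 := by
  simp [hardThreshold, not_le.2 h]

lemma hardThreshold_eq_zero {x : Fin p → Fin p → ℝ} (h : ∀ i j, |x i j| < τ) :
    hardThreshold τ x = 0 :=
  Matrix.ext fun i j => hardThreshold_apply_of_abs_lt (h i j)

lemma abs_sub_hardThreshold_add_le {M z : Fin p → Fin p → ℝ} (hz : ∀ i j, |z i j| < τ)
    (i j : Fin p) : |M i j - hardThreshold τ (fun i j => M i j + z i j) i j| ≤ 2 * τ := by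
  have hzij := hz i j
  by_cases h : τ ≤ |M i j + z i j|
  · simp only [hardThreshold, Matrix.of_apply, if_pos h, sub_add_cancel_left, abs_neg]
    linarith [abs_nonneg (z i j)]
  · simp only [hardThreshold, Matrix.of_apply, if_neg h, sub_zero]
    calc |M i j| = |(M i j + z i j) - z i j| := by rw [add_sub_cancel_right]
      _ ≤ |M i j + z i j| + |z i j| := abs_sub _ _
      _ ≤ 2 * τ := by linarith [not_le.1 h]

/-- `M - hardThreshold τ (M + z)` vanishes off the support of `M` and has entries at most `2τ`,
so the Schur test bounds its spectral norm by `2kτ`. -/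
lemma specNorm_sub_two_mul_le_specNorm_hardThreshold {k : ℕ} {M : Matrix (Fin p) (Fin p) ℝ}
    (hM : IsKSparse k M) (hτ : 0 ≤ τ) {z : Fin p → Fin p → ℝ} (hz : ∀ i j, |z i j| < τ) :
    specNorm M - 2 * k * τ ≤ specNorm (hardThreshold τ fun i j => M i j + z i j) := by
  set T := hardThreshold τ fun i j => M i j + z i j
  have hsparse : IsKSparse k (M - T) := hM.mono fun i j hne hMij => hne <| by
    have hT : T i j = 0 := hardThreshold_apply_of_abs_lt (by simpa [hMij] using hz i j)
    simp [hT, hMij]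
  have hnorm : specNorm (M - T) ≤ k * (2 * τ) :=
    hsparse.specNorm_le (by positivity) (abs_sub_hardThreshold_add_le hz)
  have := norm_sub_norm_le M T
  simp only [specNorm_eq_l2_opNorm] at *
  linarith

end HardThreshold

lemma ProbabilityTheory.hasSubgaussianMGF_id_gaussianReal (v : ℝ≥0) :
    HasSubgaussianMGF id v (gaussianReal 0 v) where
  integrable_exp_mul t := integrable_exp_mul_gaussianReal t
  mgf_le t := by simp [mgf_id_gaussianReal]

lemma ProbabilityTheory.gaussianReal_abs_ge_le (v : ℝ≥0) {τ : ℝ} (hτ : 0 ≤ τ) :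
    gaussianReal 0 v {x | τ ≤ |x|} ≤ ENNReal.ofReal (2 * exp (-τ ^ 2 / (2 * v))) := by
  have hG := hasSubgaussianMGF_id_gaussianReal v
  have hsplit : {x : ℝ | τ ≤ |x|} = {x | τ ≤ id x} ∪ {x | τ ≤ (-id) x} := by
    ext x; simp [le_abs]
  rw [hsplit, ← ofReal_measureReal, two_mul]
  gcongr
  calc (gaussianReal 0 v).real ({x | τ ≤ id x} ∪ {x | τ ≤ (-id) x})
      ≤ (gaussianReal 0 v).real {x | τ ≤ id x} + (gaussianReal 0 v).real {x | τ ≤ (-id) x} :=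
        measureReal_union_le _ _
    _ ≤ _ := add_le_add (hG.measure_ge_le hτ) (hG.neg.measure_ge_le hτ)

section GaussianNoise

variable {p : ℕ}

lemma measurePreserving_stdGaussMatrix_apply (i j : Fin p) :
    MeasurePreserving (fun z => z i j) (stdGaussMatrix p) (gaussianReal 0 1) :=
  (measurePreserving_eval (fun _ => gaussianReal 0 1) j).comp
    (measurePreserving_eval (fun _ => Measure.pi fun _ => gaussianReal 0 1) i)

lemma stdGaussMatrix_exists_abs_ge_le {τ : ℝ} (hτ : 0 ≤ τ) :
    stdGaussMatrix p {z | ∃ i j, τ ≤ |z i j|} ≤ ENNReal.ofReal (2 * p ^ 2 * exp (-τ ^ 2 / 2)) := by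
  have hentry (i j : Fin p) : stdGaussMatrix p {z | τ ≤ |z i j|} ≤
      ENNReal.ofReal (2 * exp (-τ ^ 2 / 2)) := by
    rw [← Set.preimage_ofPred_eq (p := fun x : ℝ => τ ≤ |x|),
      (measurePreserving_stdGaussMatrix_apply i j).measure_preimage
        (measurableSet_le measurable_const measurable_abs).nullMeasurableSet]
    simpa using gaussianReal_abs_ge_le 1 hτ
  simp only [Set.ofPred_exists]
  calc stdGaussMatrix p (⋃ i, ⋃ j, {z | τ ≤ |z i j|})
      ≤ ∑ i, ∑ j, stdGaussMatrix p {z | τ ≤ |z i j|} :=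
        (measure_iUnion_fintype_le _ _).trans
          (sum_le_sum fun i _ => measure_iUnion_fintype_le _ _)
    _ ≤ ∑ _i : Fin p, ∑ _j : Fin p, ENNReal.ofReal (2 * exp (-τ ^ 2 / 2)) := by
        gcongr with i _ j _; exact hentry i j
    _ = ENNReal.ofReal (2 * p ^ 2 * exp (-τ ^ 2 / 2)) := by
        simp only [sum_const, card_univ, Fintype.card_fin, nsmul_eq_mul]
        rw [← ENNReal.ofReal_natCast, ← ENNReal.ofReal_mul (by positivity),
          ← ENNReal.ofReal_mul (by positivity)]
        ring_nf

lemma PM_apply (M : Matrix (Fin p) (Fin p) ℝ) (s : Set (Fin p → Fin p → ℝ)) :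
    PM M s = stdGaussMatrix p ((fun z i j => M i j + z i j) ⁻¹' s) :=
  MeasurableEquiv.map_apply (MeasurableEquiv.addLeft (show Fin p → Fin p → ℝ from M)) s

lemma PM_le_of_forall_abs_lt {M : Matrix (Fin p) (Fin p) ℝ} {s : Set (Fin p → Fin p → ℝ)}
    {τ : ℝ}
    (h : ∀ z : Fin p → Fin p → ℝ, (∀ i j, |z i j| < τ) → (fun i j => M i j + z i j) ∉ s) :
    PM M s ≤ stdGaussMatrix p {z | ∃ i j, τ ≤ |z i j|} := by
  rw [PM_apply]
  refine measure_mono fun z hz => ?_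
  by_contra hsmall
  simp only [Set.mem_ofPred_eq, not_exists, not_le] at hsmall
  exact h z hsmall hz

end GaussianNoise

theorem threshold_test_upper_bound_general (p k : ℕ) (hp : 1 ≤ p) (hk1 : 1 ≤ k)
    (ε : ℝ) (hε0 : 0 < ε) (hε1 : ε < 1)
    (τ : ℝ) (hτ : τ = Real.sqrt (2 * Real.log (4 * (p : ℝ) ^ 2 / ε)))
    (lam : ℝ) (hlam : 4 * (k : ℝ) * τ ≤ lam) :
    PM (0 : Matrix (Fin p) (Fin p) ℝ) {x | 2 * (k : ℝ) * τ ≤ specNorm (hardThreshold τ x)} +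
      ⨆ M ∈ ThetaSet p k lam,
        PM M {x | ¬ (2 * (k : ℝ) * τ ≤ specNorm (hardThreshold τ x))} ≤
      ENNReal.ofReal ε := by
  have hp1 : (1 : ℝ) ≤ p := by exact_mod_cast hp
  have hratio : 1 < 4 * (p : ℝ) ^ 2 / ε := by rw [one_lt_div hε0]; nlinarith
  have hτpos : 0 < τ := hτ ▸ Real.sqrt_pos.2 (by linarith [Real.log_pos hratio])
  have hkτ : 0 < 2 * (k : ℝ) * τ := by
    have : (1 : ℝ) ≤ k := by exact_mod_cast hk1
    positivity
  have hbad : stdGaussMatrix p {z | ∃ i j, τ ≤ |z i j|} ≤ ENNReal.ofReal (ε / 2) := by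
    convert stdGaussMatrix_exists_abs_ge_le hτpos.le using 2
    rw [hτ, Real.sq_sqrt (by linarith [Real.log_pos hratio]), neg_div,
      mul_div_cancel_left₀ _ two_ne_zero, Real.exp_neg, Real.exp_log (by linarith)]
    field_simp
    ring
  have htypeI : PM (0 : Matrix (Fin p) (Fin p) ℝ)
      {x | 2 * (k : ℝ) * τ ≤ specNorm (hardThreshold τ x)} ≤ ENNReal.ofReal (ε / 2) := by
    refine (PM_le_of_forall_abs_lt fun z hz hψ => ?_).trans hbad
    rw [Set.mem_ofPred_eq, hardThreshold_eq_zero (by simpa using hz), specNorm_eq_l2_opNorm,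
      norm_zero] at hψ
    linarith
  have htypeII : ⨆ M ∈ ThetaSet p k lam,
      PM M {x | ¬ (2 * (k : ℝ) * τ ≤ specNorm (hardThreshold τ x))} ≤ ENNReal.ofReal (ε / 2) :=
    iSup₂_le fun M ⟨hMs, hMlam⟩ => by
      refine (PM_le_of_forall_abs_lt fun z hz hψ => ?_).trans hbad
      exact hψ <| by
        linarith [specNorm_sub_two_mul_le_specNorm_hardThreshold hMs hτpos.le hz]
  calc _ ≤ ENNReal.ofReal (ε / 2) + ENNReal.ofReal (ε / 2) := add_le_add htypeI htypeII
    _ = ENNReal.ofReal ε := by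
      rw [← ENNReal.ofReal_add (by positivity) (by positivity), add_halves]

/-- the entrywise-thresholding spectral test succeeds in the highly sparse regime. -/
theorem threshold_test_upper_bound (p k : ℕ) (hp : 1 ≤ p) (hk1 : 1 ≤ k) (hkp : k ≤ p)
    (ε : ℝ) (hε0 : 0 < ε) (hε1 : ε < 1)
    (τ : ℝ) (hτ : τ = Real.sqrt (2 * Real.log (4 * (p : ℝ) ^ 2 / ε)))
    (lam : ℝ) (hlam : 4 * (k : ℝ) * τ ≤ lam) :
    PM (0 : Matrix (Fin p) (Fin p) ℝ) {x | 2 * (k : ℝ) * τ ≤ specNorm (hardThreshold τ x)} +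
      ⨆ M ∈ ThetaSet p k lam,
        PM M {x | ¬ (2 * (k : ℝ) * τ ≤ specNorm (hardThreshold τ x))} ≤
      ENNReal.ofReal ε :=
  threshold_test_upper_bound_general p k hp hk1 ε hε0 hε1 τ hτ lam hlam
end

section
/- Let Θ′ be a measurable parameter space, θ ↦ P_θ a Markov kernel from Θ′ to a sample space (𝒳, ℬ), and Θ₀, Θ₁ ⊆ Θ′ measurable subsets. Define ℰ(Θ₀,Θ₁) = inf_{A ∈ ℬ} sup{P_{θ₀}(A) + P_{θ₁}(𝒳∖A) : θ₀ ∈ Θ₀, θ₁ ∈ Θ₁}. Let π₀, π₁ be probability measures on Θ′ and P_{π_i}(·) = ∫ P_θ(·) dπ_i(θ) the induced mixtures. Suppose TV(P_{π₀}, P_{π₁}) ≤ 1 − δ for some δ ∈ [0,1], and π_i(Θ_i) ≥ 1 − ε_i for i = 0,1 with ε₀, ε₁ ∈ [0,1). Then ℰ(Θ₀,Θ₁) ≥ δ − ε₀ − ε₁. -/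
/-!
Le Cam's two-point argument with composite hypotheses. For every test `A`, the mixtures satisfy
`1 ≤ P_{π₀}(A) + P_{π₁}(Aᶜ) + TV(P_{π₀}, P_{π₁})`. Each mixture mass is at most the worst-case
mass over the bulk `Θᵢ` of its prior plus the prior mass `εᵢ` left outside it, so
`1 ≤ sup_{θ₀ ∈ Θ₀, θ₁ ∈ Θ₁} (P_{θ₀}(A) + P_{θ₁}(Aᶜ)) + ε₀ + ε₁ + (1 - δ)`.
-/

open MeasureTheory ProbabilityTheory
open scoped ENNReal

/-- Total variation distance between two measures, as a supremum over measurable sets. -/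
noncomputable def tvDist {𝒳 : Type*} [MeasurableSpace 𝒳] (P Q : Measure 𝒳) : ℝ≥0∞ :=
  ⨆ (A : Set 𝒳) (_ : MeasurableSet A), max (P A - Q A) (Q A - P A)

section TotalVariation

variable {𝒳 : Type*} [MeasurableSpace 𝒳]

lemma le_add_tvDist (P Q : Measure 𝒳) {A : Set 𝒳} (hA : MeasurableSet A) :
    Q A ≤ P A + tvDist P Q :=
  tsub_le_iff_left.mp <| (le_max_right _ _).trans <|
    le_iSup₂ (f := fun A (_ : MeasurableSet A) ↦ max (P A - Q A) (Q A - P A)) A hA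

lemma one_le_add_add_tvDist (P Q : Measure 𝒳) [IsProbabilityMeasure Q] {A : Set 𝒳}
    (hA : MeasurableSet A) : 1 ≤ P A + Q Aᶜ + tvDist P Q := by
  calc (1 : ℝ≥0∞) = Q A + Q Aᶜ := (prob_add_prob_compl hA).symm
    _ ≤ P A + tvDist P Q + Q Aᶜ := by gcongr; exact le_add_tvDist P Q hA
    _ = P A + Q Aᶜ + tvDist P Q := add_right_comm _ _ _

end TotalVariation

section Mixture

variable {Θ : Type*} [MeasurableSpace Θ] {μ : Measure Θ} {s : Set Θ}

lemma prob_compl_le_ofReal [IsProbabilityMeasure μ] (hs : MeasurableSet s) {ε : ℝ}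
    (h : ENNReal.ofReal (1 - ε) ≤ μ s) : μ sᶜ ≤ ENNReal.ofReal ε := by
  rw [prob_compl_eq_one_sub hs, tsub_le_iff_right]
  calc (1 : ℝ≥0∞) = ENNReal.ofReal (ε + (1 - ε)) := by simp
    _ ≤ ENNReal.ofReal ε + ENNReal.ofReal (1 - ε) := ENNReal.ofReal_add_le
    _ ≤ ENNReal.ofReal ε + μ s := by gcongr

lemma nonempty_of_ofReal_one_sub_le {ε : ℝ} (hε : ε < 1) (h : ENNReal.ofReal (1 - ε) ≤ μ s) :
    s.Nonempty :=
  nonempty_of_measure_ne_zero <| (ENNReal.ofReal_pos.mpr (by linarith)).trans_le h |>.ne'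

lemma lintegral_le_biSup_add_measure_compl [IsProbabilityMeasure μ] (hs : MeasurableSet s)
    {f : Θ → ℝ≥0∞} (hf : ∀ θ, f θ ≤ 1) : ∫⁻ θ, f θ ∂μ ≤ (⨆ θ ∈ s, f θ) + μ sᶜ := by
  rw [← lintegral_add_compl f hs]
  gcongr
  · calc ∫⁻ θ in s, f θ ∂μ ≤ ∫⁻ _ in s, ⨆ θ ∈ s, f θ ∂μ :=
          setLIntegral_mono measurable_const fun θ hθ ↦ le_biSup f hθ
      _ = (⨆ θ ∈ s, f θ) * μ s := setLIntegral_const _ _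
      _ ≤ ⨆ θ ∈ s, f θ := mul_le_of_le_one_right' prob_le_one
  · calc ∫⁻ θ in sᶜ, f θ ∂μ ≤ ∫⁻ _ in sᶜ, 1 ∂μ := setLIntegral_mono measurable_const fun θ _ ↦ hf θ
      _ = μ sᶜ := by rw [setLIntegral_const, one_mul]

lemma bind_apply_le_biSup_add_measure_compl {𝒳 : Type*} [MeasurableSpace 𝒳]
    (κ : Kernel Θ 𝒳) [IsMarkovKernel κ] [IsProbabilityMeasure μ] (hs : MeasurableSet s)
    {B : Set 𝒳} (hB : MeasurableSet B) : μ.bind κ B ≤ (⨆ θ ∈ s, κ θ B) + μ sᶜ := by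
  rw [Measure.bind_apply hB κ.aemeasurable]
  exact lintegral_le_biSup_add_measure_compl hs fun θ ↦ prob_le_one

end Mixture

theorem test_lower_bound_from_priors_general
    (Θ' 𝒳 : Type*) [MeasurableSpace Θ'] [MeasurableSpace 𝒳]
    (κ : Kernel Θ' 𝒳) [IsMarkovKernel κ]
    (Θ₀ Θ₁ : Set Θ') (hΘ₀ : MeasurableSet Θ₀) (hΘ₁ : MeasurableSet Θ₁)
    (π₀ π₁ : Measure Θ') [IsProbabilityMeasure π₀] [IsProbabilityMeasure π₁]
    (δ ε₀ ε₁ : ℝ) (hδ1 : δ ≤ 1)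
    (hε₀0 : 0 ≤ ε₀) (hε₀1 : ε₀ < 1) (hε₁0 : 0 ≤ ε₁) (hε₁1 : ε₁ < 1)
    (htv : tvDist (π₀.bind κ) (π₁.bind κ) ≤ ENNReal.ofReal (1 - δ))
    (hπ₀ : ENNReal.ofReal (1 - ε₀) ≤ π₀ Θ₀)
    (hπ₁ : ENNReal.ofReal (1 - ε₁) ≤ π₁ Θ₁) :
    ENNReal.ofReal (δ - ε₀ - ε₁) ≤
      ⨅ (A : Set 𝒳) (_ : MeasurableSet A),
        ⨆ θ₀ ∈ Θ₀, ⨆ θ₁ ∈ Θ₁, (κ θ₀ A + κ θ₁ Aᶜ) := by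
  refine le_iInf₂ fun A hA ↦ ?_
  set D := ⨆ θ₀ ∈ Θ₀, ⨆ θ₁ ∈ Θ₁, (κ θ₀ A + κ θ₁ Aᶜ)
  have hsup : (⨆ θ ∈ Θ₀, κ θ A) + (⨆ θ ∈ Θ₁, κ θ Aᶜ) ≤ D :=
    ENNReal.biSup_add_biSup_le (nonempty_of_ofReal_one_sub_le hε₀1 hπ₀)
      (nonempty_of_ofReal_one_sub_le hε₁1 hπ₁) fun θ₀ h₀ θ₁ h₁ ↦
        le_iSup₂_of_le θ₀ h₀ (le_iSup₂_of_le θ₁ h₁ le_rfl)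
  have hLeCam : 1 ≤ D + (ENNReal.ofReal (1 - δ) + ENNReal.ofReal ε₀ + ENNReal.ofReal ε₁) :=
    calc 1 ≤ π₀.bind κ A + π₁.bind κ Aᶜ + tvDist (π₀.bind κ) (π₁.bind κ) :=
          one_le_add_add_tvDist _ _ hA
      _ ≤ ((⨆ θ ∈ Θ₀, κ θ A) + ENNReal.ofReal ε₀) + ((⨆ θ ∈ Θ₁, κ θ Aᶜ) + ENNReal.ofReal ε₁)
            + ENNReal.ofReal (1 - δ) := by
          gcongr
          · exact (bind_apply_le_biSup_add_measure_compl κ hΘ₀ hA).trans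
              (by gcongr; exact prob_compl_le_ofReal hΘ₀ hπ₀)
          · exact (bind_apply_le_biSup_add_measure_compl κ hΘ₁ hA.compl).trans
              (by gcongr; exact prob_compl_le_ofReal hΘ₁ hπ₁)
      _ = ((⨆ θ ∈ Θ₀, κ θ A) + (⨆ θ ∈ Θ₁, κ θ Aᶜ))
            + (ENNReal.ofReal (1 - δ) + ENNReal.ofReal ε₀ + ENNReal.ofReal ε₁) := by ring
      _ ≤ D + (ENNReal.ofReal (1 - δ) + ENNReal.ofReal ε₀ + ENNReal.ofReal ε₁) := by gcongr
  have hε : ENNReal.ofReal ((1 - δ) + ε₀ + ε₁)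
      = ENNReal.ofReal (1 - δ) + ENNReal.ofReal ε₀ + ENNReal.ofReal ε₁ := by
    rw [ENNReal.ofReal_add (by linarith) hε₁0, ENNReal.ofReal_add (by linarith) hε₀0]
  calc ENNReal.ofReal (δ - ε₀ - ε₁) = 1 - ENNReal.ofReal ((1 - δ) + ε₀ + ε₁) := by
        rw [← ENNReal.ofReal_one, ← ENNReal.ofReal_sub _ (by linarith)]
        ring_nf
    _ ≤ D := by rwa [tsub_le_iff_right, hε]

/-- Le Cam-type lower bound for testing with approximately supported priors. -/
theorem test_lower_bound_from_priors
    (Θ' 𝒳 : Type*) [MeasurableSpace Θ'] [MeasurableSpace 𝒳]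
    (κ : Kernel Θ' 𝒳) [IsMarkovKernel κ]
    (Θ₀ Θ₁ : Set Θ') (hΘ₀ : MeasurableSet Θ₀) (hΘ₁ : MeasurableSet Θ₁)
    (π₀ π₁ : Measure Θ') [IsProbabilityMeasure π₀] [IsProbabilityMeasure π₁]
    (δ ε₀ ε₁ : ℝ) (hδ0 : 0 ≤ δ) (hδ1 : δ ≤ 1)
    (hε₀0 : 0 ≤ ε₀) (hε₀1 : ε₀ < 1) (hε₁0 : 0 ≤ ε₁) (hε₁1 : ε₁ < 1)
    (htv : tvDist (π₀.bind κ) (π₁.bind κ) ≤ ENNReal.ofReal (1 - δ))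
    (hπ₀ : ENNReal.ofReal (1 - ε₀) ≤ π₀ Θ₀)
    (hπ₁ : ENNReal.ofReal (1 - ε₁) ≤ π₁ Θ₁) :
    ENNReal.ofReal (δ - ε₀ - ε₁) ≤
      ⨅ (A : Set 𝒳) (_ : MeasurableSet A),
        ⨆ θ₀ ∈ Θ₀, ⨆ θ₁ ∈ Θ₁, (κ θ₀ A + κ θ₁ Aᶜ) :=
  test_lower_bound_from_priors_general Θ' 𝒳 κ Θ₀ Θ₁ hΘ₀ hΘ₁ π₀ π₁ δ ε₀ ε₁ hδ1 hε₀0 hε₀1 hε₁0 hε₁1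
    htv hπ₀ hπ₁
end

section
/- Let m ≥ 1, let γ = N(0, I_m) be the standard Gaussian distribution on ℝ^m, and let P be an arbitrary probability distribution on ℝ^m. Then, as an identity in [0, ∞], χ²(γ * P ‖ γ) = E[exp(⟨X, X̃⟩)] − 1, where * denotes convolution, ⟨·,·⟩ is the Euclidean inner product, and X, X̃ are independent random vectors each with distribution P. -/
open MeasureTheory ProbabilityTheory
open scoped ENNReal

noncomputable section

/-- χ²-divergence: `∫ (dP/dQ − 1)² dQ` if `P ≪ Q`, and `∞` otherwise. -/
def chiSqDiv {X : Type*} [MeasurableSpace X] (P Q : Measure X) : ℝ≥0∞ :=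
  @ite _ (P ≪ Q) (Classical.propDecidable _)
    (∫⁻ x, ENNReal.ofReal (((P.rnDeriv Q x).toReal - 1) ^ 2) ∂Q) ⊤

/-- Convolution of two measures on an additive group. -/
def mconv {X : Type*} [MeasurableSpace X] [Add X] (P Q : Measure X) : Measure X :=
  (P.prod Q).map (fun q => q.1 + q.2)

/-- The standard Gaussian distribution `N(0, I_m)` on `ℝ^m`. -/
def stdGaussVec (m : ℕ) : Measure (Fin m → ℝ) :=
  Measure.pi fun _ => gaussianReal 0 1

end

/-! Translating `γ` by `x` multiplies it by the density `exp (⟨x, y⟩ - |x|² / 2)` (Cameron–Martin),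
so `γ * P` has the density `f y = ∫ exp (⟨x, y⟩ - |x|² / 2) dP(x)` with respect to `γ`, and
`χ²(γ * P ‖ γ) = ∫ f² dγ - 1`. Expanding `f²` as a double integral over `P ⊗ P` and integrating
in `y` first, the product of the densities at `x` and `x̃` is `exp ⟨x, x̃⟩` times the density at
`x + x̃`, which has `γ`-integral one. -/

namespace MeasureTheory

theorem lintegral_pi_prod_eq_prod {ι : Type*} [Fintype ι] {α : ι → Type*}
    [∀ i, MeasurableSpace (α i)] {μ : ∀ i, Measure (α i)} [∀ i, IsProbabilityMeasure (μ i)]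
    {f : ∀ i, α i → ℝ≥0∞} (hf : ∀ i, Measurable (f i)) :
    ∫⁻ x, ∏ i, f i (x i) ∂Measure.pi μ = ∏ i, ∫⁻ a, f i a ∂μ i := by
  rw [lintegral_prod_eq_prod_lintegral_of_indepFun _ _
    (iIndepFun_pi fun i => (hf i).aemeasurable) fun i => (hf i).comp (measurable_pi_apply i)]
  exact Finset.prod_congr rfl fun i _ => (measurePreserving_eval μ i).lintegral_comp (hf i)

theorem Measure.pi_withDensity {ι : Type*} [Fintype ι] {α : ι → Type*}
    [∀ i, MeasurableSpace (α i)] {μ : ∀ i, Measure (α i)} [∀ i, IsProbabilityMeasure (μ i)]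
    {f : ∀ i, α i → ℝ≥0∞} (hf : ∀ i, Measurable (f i))
    [∀ i, SigmaFinite ((μ i).withDensity (f i))] :
    Measure.pi (fun i => (μ i).withDensity (f i)) =
      (Measure.pi μ).withDensity (fun x => ∏ i, f i (x i)) := by
  refine Measure.pi_eq fun s hs => ?_
  rw [withDensity_apply _ (.univ_pi hs), ← lintegral_indicator (.univ_pi hs)]
  have hind : (Set.univ.pi s).indicator (fun x => ∏ i, f i (x i)) =
      fun x => ∏ i, (s i).indicator (f i) (x i) := by
    ext x
    classical simp [Set.indicator, Finset.prod_ite_zero]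
  rw [hind, lintegral_pi_prod_eq_prod fun i => (hf i).indicator (hs i)]
  exact Finset.prod_congr rfl fun i _ => by
    rw [lintegral_indicator (hs i), withDensity_apply _ (hs i)]

theorem Measure.conv_eq_withDensity_of_map_add {M : Type*} [AddMonoid M] [MeasurableSpace M]
    [MeasurableAdd₂ M] {μ ν : Measure M} [SFinite μ] [SFinite ν] {g : M → M → ℝ≥0∞}
    (hg : Measurable (Function.uncurry g)) (hμ : ∀ x, μ.map (· + x) = μ.withDensity (g x)) :
    μ ∗ ν = μ.withDensity fun y => ∫⁻ x, g x y ∂ν := by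
  refine ext_of_lintegral _ fun φ hφ => ?_
  have hgφ : Measurable fun p : M × M => g p.1 p.2 * φ p.2 := by fun_prop
  calc ∫⁻ z, φ z ∂(μ ∗ ν) = ∫⁻ x, ∫⁻ y, g x y * φ y ∂μ ∂ν := by
        rw [lintegral_conv hφ, lintegral_lintegral_swap (by fun_prop)]
        refine lintegral_congr fun x => ?_
        rw [← lintegral_map hφ (by fun_prop), hμ, lintegral_withDensity_eq_lintegral_mul _
          hg.of_uncurry_left hφ]
        rfl
    _ = ∫⁻ y, (∫⁻ x, g x y ∂ν) * φ y ∂μ := by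
        rw [lintegral_lintegral_swap hgφ.aemeasurable]
        exact lintegral_congr fun y => lintegral_mul_const _ hg.of_uncurry_right
    _ = _ := (lintegral_withDensity_eq_lintegral_mul _ hg.lintegral_prod_left' hφ).symm

end MeasureTheory

theorem gaussianReal_eq_withDensity_exp (c : ℝ) {v : NNReal} (hv : v ≠ 0) :
    gaussianReal c v = (gaussianReal 0 v).withDensity
      fun y => ENNReal.ofReal (Real.exp ((c * y - c ^ 2 / 2) / v)) := by
  rw [gaussianReal_of_var_ne_zero c hv, gaussianReal_of_var_ne_zero 0 hv,
    ← withDensity_mul _ (measurable_gaussianPDF 0 v) (by fun_prop)]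
  congr 1
  ext y
  simp only [Pi.mul_apply, gaussianPDF, gaussianPDFReal]
  rw [← ENNReal.ofReal_mul (by positivity), mul_assoc _ (Real.exp _), ← Real.exp_add]
  congr 3
  field_simp
  ring

noncomputable def gaussShiftDensity {m : ℕ} (x y : Fin m → ℝ) : ℝ≥0∞ :=
  ENNReal.ofReal (Real.exp (∑ i, x i * y i - (∑ i, x i ^ 2) / 2))

theorem measurable_gaussShiftDensity {m : ℕ} :
    Measurable (Function.uncurry (gaussShiftDensity (m := m))) := by
  unfold Function.uncurry gaussShiftDensity
  fun_prop

instance isProbabilityMeasure_stdGaussVec {m : ℕ} : IsProbabilityMeasure (stdGaussVec m) := by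
  unfold stdGaussVec; infer_instance

theorem stdGaussVec_map_add_const {m : ℕ} (x : Fin m → ℝ) :
    (stdGaussVec m).map (· + x) = (stdGaussVec m).withDensity (gaussShiftDensity x) := by
  have hshift : ∀ i, (gaussianReal 0 1).map (· + x i) = (gaussianReal 0 1).withDensity
      fun y => ENNReal.ofReal (Real.exp (x i * y - x i ^ 2 / 2)) := fun i => by
    rw [gaussianReal_map_add_const, zero_add, gaussianReal_eq_withDensity_exp _ one_ne_zero]
    simp only [NNReal.coe_one, div_one]
  have : ∀ i, SigmaFinite ((gaussianReal 0 1).withDensity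
      fun y => ENNReal.ofReal (Real.exp (x i * y - x i ^ 2 / 2))) := fun i => by
    rw [← hshift]; infer_instance
  have hprod : ∀ y : Fin m → ℝ,
      ∏ i, ENNReal.ofReal (Real.exp (x i * y i - x i ^ 2 / 2)) = gaussShiftDensity x y := by
    intro y
    rw [gaussShiftDensity, ← ENNReal.ofReal_prod_of_nonneg fun i _ => (Real.exp_pos _).le,
      ← Real.exp_sum, Finset.sum_sub_distrib, Finset.sum_div]
  calc (stdGaussVec m).map (· + x)
      = Measure.pi fun i => (gaussianReal 0 1).map (· + x i) :=
        Measure.pi_map_pi (f := fun i y => y + x i) fun _ => by fun_prop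
    _ = (stdGaussVec m).withDensity (gaussShiftDensity x) := by
        simp_rw [hshift]
        rw [Measure.pi_withDensity fun i => by fun_prop]
        simp_rw [hprod]
        rfl

theorem lintegral_gaussShiftDensity {m : ℕ} (x : Fin m → ℝ) :
    ∫⁻ y, gaussShiftDensity x y ∂stdGaussVec m = 1 := by
  rw [← setLIntegral_univ, ← withDensity_apply _ .univ, ← stdGaussVec_map_add_const,
    Measure.map_apply (measurable_add_const x) .univ, Set.preimage_univ, measure_univ]

theorem gaussShiftDensity_mul {m : ℕ} (x x' y : Fin m → ℝ) :
    gaussShiftDensity x y * gaussShiftDensity x' y =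
      ENNReal.ofReal (Real.exp (∑ i, x i * x' i)) * gaussShiftDensity (x + x') y := by
  simp only [gaussShiftDensity, ← ENNReal.ofReal_mul (Real.exp_pos _).le, ← Real.exp_add,
    Pi.add_apply]
  congr 2
  simp only [add_sq, add_mul, Finset.sum_add_distrib, ← Finset.mul_sum, mul_assoc]
  ring

theorem lintegral_gaussShiftDensity_mul {m : ℕ} (x x' : Fin m → ℝ) :
    ∫⁻ y, gaussShiftDensity x y * gaussShiftDensity x' y ∂stdGaussVec m =
      ENNReal.ofReal (Real.exp (∑ i, x i * x' i)) := by
  simp_rw [gaussShiftDensity_mul]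
  rw [lintegral_const_mul _ (measurable_gaussShiftDensity.of_uncurry_left),
    lintegral_gaussShiftDensity, mul_one]

theorem ENNReal.ofReal_toReal_sub_one_sq_add_two_mul {a : ℝ≥0∞} (ha : a ≠ ∞) :
    ENNReal.ofReal ((a.toReal - 1) ^ 2) + 2 * a = a ^ 2 + 1 := by
  set r := a.toReal
  have hr : 0 ≤ r := ENNReal.toReal_nonneg
  rw [← ENNReal.ofReal_toReal ha, ← ENNReal.ofReal_pow hr, ← ENNReal.ofReal_ofNat 2,
    ← ENNReal.ofReal_mul zero_le_two, ← ENNReal.ofReal_one,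
    ← ENNReal.ofReal_add (sq_nonneg _) (by positivity),
    ← ENNReal.ofReal_add (sq_nonneg _) zero_le_one]
  congr 1
  ring

theorem lintegral_ofReal_toReal_sub_one_sq_add_one {α : Type*} [MeasurableSpace α]
    {μ : Measure α} [IsProbabilityMeasure μ] {f : α → ℝ≥0∞} (hf : AEMeasurable f μ)
    (hf1 : ∫⁻ x, f x ∂μ = 1) :
    ∫⁻ x, ENNReal.ofReal (((f x).toReal - 1) ^ 2) ∂μ + 1 = ∫⁻ x, f x ^ 2 ∂μ := by
  have hfin : ∀ᵐ x ∂μ, f x ≠ ∞ := ae_lt_top' hf (by simp [hf1]) |>.mono fun _ => ne_of_lt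
  have key := lintegral_congr_ae (hfin.mono fun x => ENNReal.ofReal_toReal_sub_one_sq_add_two_mul)
  rw [lintegral_add_left' (by fun_prop), lintegral_add_right _ measurable_const,
    lintegral_const_mul' _ _ (by simp), hf1, lintegral_const, measure_univ, mul_one, mul_one] at key
  rw [← ENNReal.add_left_inj ENNReal.one_ne_top, add_assoc, one_add_one_eq_two, key]

theorem chiSqDiv_withDensity {α : Type*} [MeasurableSpace α] {μ : Measure α}
    [IsProbabilityMeasure μ] {f : α → ℝ≥0∞} (hf : Measurable f) (hf1 : ∫⁻ x, f x ∂μ = 1) :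
    chiSqDiv (μ.withDensity f) μ = ∫⁻ x, f x ^ 2 ∂μ - 1 := by
  rw [chiSqDiv, if_pos (withDensity_absolutelyContinuous μ f),
    ← lintegral_ofReal_toReal_sub_one_sq_add_one hf.aemeasurable hf1,
    ENNReal.add_sub_cancel_right ENNReal.one_ne_top]
  exact lintegral_congr_ae <| (Measure.rnDeriv_withDensity μ hf).mono fun x hx =>
    congrArg (fun a => ENNReal.ofReal ((a.toReal - 1) ^ 2)) hx

theorem lintegral_sq_lintegral {α β : Type*} [MeasurableSpace α] [MeasurableSpace β]
    {μ : Measure α} {ν : Measure β} [SFinite μ] [SFinite ν] {g : β → α → ℝ≥0∞}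
    (hg : Measurable (Function.uncurry g)) :
    ∫⁻ y, (∫⁻ x, g x y ∂ν) ^ 2 ∂μ = ∫⁻ p : β × β, ∫⁻ y, g p.1 y * g p.2 y ∂μ ∂ν.prod ν := by
  have hsq : ∀ y, (∫⁻ x, g x y ∂ν) ^ 2 = ∫⁻ p : β × β, g p.1 y * g p.2 y ∂ν.prod ν := fun y => by
    rw [sq, lintegral_prod_mul hg.of_uncurry_right.aemeasurable hg.of_uncurry_right.aemeasurable]
  simp_rw [hsq]
  exact lintegral_lintegral_swap (by fun_prop)

theorem chiSq_gaussian_mixture_general (m : ℕ)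
    (P : Measure (Fin m → ℝ)) [IsProbabilityMeasure P] :
    chiSqDiv (mconv (stdGaussVec m) P) (stdGaussVec m) =
      (∫⁻ q, ENNReal.ofReal (Real.exp (∑ i, q.1 i * q.2 i)) ∂(P.prod P)) - 1 := by
  -- `mconv` is definitionally Mathlib's `Measure.conv`
  have hconv : mconv (stdGaussVec m) P =
      (stdGaussVec m).withDensity fun y => ∫⁻ x, gaussShiftDensity x y ∂P :=
    Measure.conv_eq_withDensity_of_map_add measurable_gaussShiftDensity
      stdGaussVec_map_add_const
  have hmass : ∫⁻ y, ∫⁻ x, gaussShiftDensity x y ∂P ∂stdGaussVec m = 1 := by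
    rw [lintegral_lintegral_swap (f := fun y x => gaussShiftDensity x y)
      (measurable_gaussShiftDensity.comp measurable_swap).aemeasurable]
    simp only [lintegral_gaussShiftDensity, lintegral_const, measure_univ, mul_one]
  have hdens : Measurable fun y => ∫⁻ x, gaussShiftDensity x y ∂P :=
    measurable_gaussShiftDensity.lintegral_prod_left'
  rw [hconv, chiSqDiv_withDensity hdens hmass,
    lintegral_sq_lintegral measurable_gaussShiftDensity]
  simp only [lintegral_gaussShiftDensity_mul]

/-- Ingster–Suslina: χ²-divergence of a Gaussian location mixture. -/
theorem chiSq_gaussian_mixture (m : ℕ) (hm : 1 ≤ m)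
    (P : Measure (Fin m → ℝ)) [IsProbabilityMeasure P] :
    chiSqDiv (mconv (stdGaussVec m) P) (stdGaussVec m) =
      (∫⁻ q, ENNReal.ofReal (Real.exp (∑ i, q.1 i * q.2 i)) ∂(P.prod P)) - 1 :=
  chiSq_gaussian_mixture_general m P
end
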